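/- Let a, b ∈ L^∞(T) be nonzero, with ā ∈ H^∞ and b ∈ H^∞ having a nontrivial inner factor (i.e., b is not outer). Then ker S_{a,b} ≠ {0}. In particular, if a ∈ conj(H^∞) with vanishing constant term (i.e., ā ∈ H^∞ with ā(0)=0) and b ∈ H^∞, then ker S_{a,b} ≠ {0}. -/

import Mathlib

open MeasureTheory Complex Real AddCircle
open scoped ENNReal ComplexConjugate

noncomputable section

instance : Fact (0 < 2 * π) := ⟨by positivity⟩

/-- Normalized Haar (Lebesgue) measure on the unit circle, realized as `AddCircle (2π)`. -/
abbrev μT : Measure (AddCircle (2 * π)) := AddCircle.haarAddCircle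

/-- The Lebesgue space `L²(𝕋)`. -/
abbrev L2 : Type := Lp ℂ 2 μT

/-- The space `L^∞(𝕋)`. -/
abbrev Linf : Type := Lp ℂ ∞ μT

/-- Multiplication of an `L²` function by an `L^∞` function, as an element of `L²`. -/
def mul2 (a : Linf) (f : L2) : L2 :=
  ((Lp.memLp f).smul (Lp.memLp a)).toLp ((a : AddCircle (2 * π) → ℂ) • (f : AddCircle (2 * π) → ℂ))

lemma mul2_coe (a : Linf) (f : L2) :
    (mul2 a f : AddCircle (2 * π) → ℂ) =ᵐ[μT] fun x => a x * f x :=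
  (MemLp.coeFn_toLp _)

/-- Multiplication in `L^∞`. -/
def mulInf (a b : Linf) : Linf :=
  ((Lp.memLp b).smul (Lp.memLp a)).toLp ((a : AddCircle (2 * π) → ℂ) • (b : AddCircle (2 * π) → ℂ))

lemma mulInf_coe (a b : Linf) :
    (mulInf a b : AddCircle (2 * π) → ℂ) =ᵐ[μT] fun x => a x * b x :=
  (MemLp.coeFn_toLp _)

/-- Complex conjugation on `Lp`. -/
def conjLp {p : ℝ≥0∞} [Fact (1 ≤ p)] (f : Lp ℂ p μT) : Lp ℂ p μT :=
  MemLp.toLp (fun x => conj (f x))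
    ⟨continuous_star.comp_aestronglyMeasurable (Lp.aestronglyMeasurable f),
      by
        rw [eLpNorm_congr_norm_ae (g := (f : AddCircle (2 * π) → ℂ))
          (Filter.Eventually.of_forall fun x => by simp)]
        exact (Lp.memLp f).2⟩

lemma conjLp_coe {p : ℝ≥0∞} [Fact (1 ≤ p)] (f : Lp ℂ p μT) :
    (conjLp f : AddCircle (2 * π) → ℂ) =ᵐ[μT] fun x => conj (f x) :=
  (MemLp.coeFn_toLp _)

/-- The Hardy space `H²`, as the subspace of `L²(𝕋)` of functions whose negative Fourier
coefficients vanish. -/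
def Hardy : Submodule ℂ L2 where
  carrier := {f | ∀ n : ℤ, n < 0 → fourierBasis.repr f n = 0}
  add_mem' := fun hf hg n hn => by simp [hf n hn, hg n hn]
  zero_mem' := fun n hn => by simp
  smul_mem' := fun c f hf n hn => by simp [hf n hn]

lemma hardy_isClosed : IsClosed (Hardy : Set L2) := by
  have h : (Hardy : Set L2)
      = ⋂ n : ℤ, ⋂ _ : n < 0, {f : L2 | fourierBasis.repr f n = 0} := by
    ext f
    simp [Hardy, Set.mem_iInter]
  rw [h]
  refine isClosed_iInter fun n => isClosed_iInter fun hn => ?_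
  have hc : Continuous fun f : L2 => fourierBasis.repr f n := by
    have : (fun f : L2 => fourierBasis.repr f n)
        = fun f : L2 => (innerSL ℂ (fourierBasis n : L2)) f := by
      ext f
      rw [HilbertBasis.repr_apply_apply]
      rfl
    rw [this]
    exact (innerSL ℂ (fourierBasis n : L2)).continuous
  exact isClosed_eq hc continuous_const

instance : CompleteSpace Hardy := hardy_isClosed.completeSpace_coe

/-- The Riesz projection `P⁺ : L² → L²`, i.e. the orthogonal projection onto `H²`. -/
def Pplus : L2 →L[ℂ] L2 := Hardy.subtypeL.comp Hardy.orthogonalProjectionOnto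

/-- The complementary projection `P⁻ = I - P⁺`. -/
def Pminus : L2 →L[ℂ] L2 := ContinuousLinearMap.id ℂ L2 - Pplus

lemma mul2_norm_le (a : Linf) (f : L2) : ‖mul2 a f‖ ≤ ‖a‖ * ‖f‖ := by
  rw [mul2, Lp.norm_toLp]
  have h := eLpNorm_smul_le_eLpNorm_top_mul_eLpNorm 2
    (Lp.aestronglyMeasurable f) (φ := (a : AddCircle (2 * π) → ℂ))
  refine le_trans (ENNReal.toReal_mono ?_ h) ?_
  · exact ENNReal.mul_ne_top (Lp.memLp a).2.ne (Lp.memLp f).2.ne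
  · rw [ENNReal.toReal_mul, Lp.norm_def, Lp.norm_def]

/-- Multiplication by an `L^∞` function `a`, as a bounded operator `M_a` on `L²`. -/
def Mult (a : Linf) : L2 →L[ℂ] L2 :=
  LinearMap.mkContinuous
    { toFun := mul2 a
      map_add' := fun f g => by
        refine Lp.ext ?_
        filter_upwards [mul2_coe a (f + g), mul2_coe a f, mul2_coe a g,
          Lp.coeFn_add f g, Lp.coeFn_add (mul2 a f) (mul2 a g)] with x h1 h2 h3 h4 h5
        simp only [h1, h5, Pi.add_apply, h2, h3, h4, mul_add]
      map_smul' := fun c f => by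
        refine Lp.ext ?_
        filter_upwards [mul2_coe a (c • f), mul2_coe a f,
          Lp.coeFn_smul c f, Lp.coeFn_smul c (mul2 a f)] with x h1 h2 h3 h4
        simp only [h1, h4, Pi.smul_apply, h2, h3, smul_eq_mul, RingHom.id_apply]
        ring }
    ‖a‖ (fun f => mul2_norm_le a f)

/-- The paired operator `S_{a,b} = a P⁺ + b P⁻` on `L²(𝕋)`. -/
def pairedS (a b : Linf) : L2 →L[ℂ] L2 :=
  (Mult a).comp Pplus + (Mult b).comp Pminus

/-- The transposed paired operator `Σ_{a,b} = P⁺ a + P⁻ b` on `L²(𝕋)`. -/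
def pairedSigma (a b : Linf) : L2 →L[ℂ] L2 :=
  Pplus.comp (Mult a) + Pminus.comp (Mult b)

/-- Membership in `H^∞`: an `L^∞` function whose negative Fourier coefficients vanish. -/
def MemHinf (a : Linf) : Prop := ∀ n : ℤ, n < 0 → fourierCoeff (a : AddCircle (2 * π) → ℂ) n = 0

/-- A pair `{a,b}` is nondegenerate if `a`, `b` and `a - b` are all nonzero a.e. on `𝕋`. -/
def Nondegenerate (a b : Linf) : Prop :=
  (∀ᵐ x ∂μT, a x ≠ 0) ∧ (∀ᵐ x ∂μT, b x ≠ 0) ∧ (∀ᵐ x ∂μT, a x - b x ≠ 0)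


/-- An inner function: a member of `H^∞` of modulus `1` a.e. on the circle. -/
def IsInnerFn (θ : Linf) : Prop := MemHinf θ ∧ ∀ᵐ x ∂μT, ‖θ x‖ = 1


-- chunk 1: basic infrastructure
section Aux

/-- Embed an essentially bounded function into `L²`. -/
def toL2 (g : AddCircle (2 * π) → ℂ) (hg : MemLp g ∞ μT) : L2 :=
  (hg.mono_exponent le_top).toLp g

lemma toL2_coe (g : AddCircle (2 * π) → ℂ) (hg : MemLp g ∞ μT) :
    (toL2 g hg : AddCircle (2 * π) → ℂ) =ᵐ[μT] g :=
  MemLp.coeFn_toLp _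

lemma memtop_fourier (n : ℤ) : MemLp (⇑(@fourier (2 * π) n)) ∞ μT :=
  memLp_top_of_bound (fourier n).continuous.aestronglyMeasurable 1
    (Filter.Eventually.of_forall fun x => le_of_eq (Circle.norm_coe _))

lemma memtop_mul {u v : AddCircle (2 * π) → ℂ} (hu : MemLp u ∞ μT) (hv : MemLp v ∞ μT) :
    MemLp (fun x => u x * v x) ∞ μT := by
  have h := hv.smul (φ := u) (r := ∞) hu
  exact (memLp_congr_ae (Filter.EventuallyEq.refl _ _)).mp h

lemma memtop_conj {u : AddCircle (2 * π) → ℂ} (hu : MemLp u ∞ μT) :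
    MemLp (fun x => conj (u x)) ∞ μT := by
  refine ⟨continuous_star.comp_aestronglyMeasurable hu.1, ?_⟩
  rw [eLpNorm_congr_norm_ae (g := u) (Filter.Eventually.of_forall fun x => by simp)]
  exact hu.2

lemma integrable_of_memtop {u : AddCircle (2 * π) → ℂ} (hu : MemLp u ∞ μT) :
    Integrable u μT :=
  memLp_one_iff_integrable.mp (hu.mono_exponent le_top)

lemma fc_congr {u v : AddCircle (2 * π) → ℂ} (h : u =ᵐ[μT] v) (n : ℤ) :
    fourierCoeff u n = fourierCoeff v n := by
  unfold fourierCoeff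
  exact integral_congr_ae (h.mono fun x hx => by simp only [hx])

lemma fc_shift {u : AddCircle (2 * π) → ℂ} (hu : MemLp u ∞ μT) (m k : ℤ) :
    fourierCoeff (fun x => fourier m x * u x) k = fourierCoeff u (k - m) := by
  unfold fourierCoeff
  refine integral_congr_ae (Filter.Eventually.of_forall fun x => ?_)
  have h : (-(k - m)) = -k + m := by ring
  simp only [smul_eq_mul, ← mul_assoc, ← fourier_add, h]

lemma fc_conj {u : AddCircle (2 * π) → ℂ} (k : ℤ) :
    fourierCoeff (fun x => conj (u x)) k = conj (fourierCoeff u (-k)) := by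
  unfold fourierCoeff
  rw [← integral_conj]
  refine integral_congr_ae (Filter.Eventually.of_forall fun x => ?_)
  simp only [smul_eq_mul, map_mul, neg_neg, ← fourier_neg, conj_conj]

lemma fc_sub {u v : AddCircle (2 * π) → ℂ} (hu : MemLp u ∞ μT) (hv : MemLp v ∞ μT) (k : ℤ) :
    fourierCoeff (fun x => u x - v x) k = fourierCoeff u k - fourierCoeff v k := by
  unfold fourierCoeff
  simp only [smul_eq_mul, mul_sub]
  exact integral_sub ((integrable_of_memtop (memtop_mul (memtop_fourier (-k)) hu)))
    ((integrable_of_memtop (memtop_mul (memtop_fourier (-k)) hv)))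

lemma fc_neg {u : AddCircle (2 * π) → ℂ} (k : ℤ) :
    fourierCoeff (fun x => -u x) k = -fourierCoeff u k := by
  unfold fourierCoeff
  simp only [smul_eq_mul, mul_neg]
  exact integral_neg _

lemma fc_fourierLp (m n : ℤ) :
    fourierCoeff (⇑(fourierLp 2 m : L2)) n = if m = n then 1 else 0 := by
  rw [← fourierBasis_repr, ← coe_fourierBasis, fourierBasis.repr_self, lp.single_apply]
  simp [eq_comm, Pi.single_apply]

lemma fc_const (c : ℂ) (n : ℤ) :
    fourierCoeff (fun _ : AddCircle (2 * π) => c) n = if n = 0 then c else 0 := by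
  have h1 : (fun _ : AddCircle (2 * π) => c) =ᵐ[μT]
      fun x => c * (fourierLp 2 0 : L2) x := by
    filter_upwards [coeFn_fourierLp (T := 2 * π) 2 0] with x hx
    rw [hx, fourier_zero, mul_one]
  rw [fc_congr h1, fourierCoeff.const_mul, fc_fourierLp]
  simp [eq_comm]

end Aux
section Aux2

lemma mem_hardy_iff {f : L2} :
    f ∈ Hardy ↔ ∀ n : ℤ, n < 0 → fourierBasis.repr f n = 0 := Iff.rfl

lemma inner_eq_tsum_fc (f g : L2) :
    inner ℂ f g = ∑' n : ℤ, conj (fourierBasis.repr f n) * (fourierBasis.repr g n) := by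
  rw [← fourierBasis.repr.inner_map_map f g, lp.inner_eq_tsum]
  exact tsum_congr fun n => by rw [RCLike.inner_apply]; exact mul_comm _ _

lemma mem_hardy_orth {g : L2} (hg : ∀ n : ℤ, 0 ≤ n → fourierBasis.repr g n = 0) :
    g ∈ Hardyᗮ := by
  rw [Submodule.mem_orthogonal]
  intro u hu
  rw [inner_eq_tsum_fc]
  have h : ∀ n : ℤ, conj (fourierBasis.repr u n) * fourierBasis.repr g n = 0 := by
    intro n
    rcases lt_or_ge n 0 with h | h
    · rw [mem_hardy_iff.mp hu n h]
      simp
    · rw [hg n h, mul_zero]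
  rw [tsum_congr h, tsum_zero]

lemma Pplus_apply_add {f g : L2} (hf : f ∈ Hardy) (hg : g ∈ Hardyᗮ) :
    Pplus (f + g) = f := by
  simp only [Pplus, ContinuousLinearMap.comp_apply, map_add]
  rw [Submodule.orthogonalProjectionOnto_apply_of_mem_orthogonal hg]
  have h2 : (Hardy.orthogonalProjectionOnto f : L2) = f :=
    congrArg Subtype.val (Submodule.orthogonalProjectionOnto_mem_subspace_eq_self (K := Hardy) ⟨f, hf⟩)
  simpa using h2

lemma Pminus_apply_add {f g : L2} (hf : f ∈ Hardy) (hg : g ∈ Hardyᗮ) :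
    Pminus (f + g) = g := by
  simp only [Pminus, ContinuousLinearMap.sub_apply, ContinuousLinearMap.id_apply,
    Pplus_apply_add hf hg]
  abel

lemma pairedS_apply (a b : Linf) (f : L2) :
    pairedS a b f = mul2 a (Pplus f) + mul2 b (Pminus f) := rfl

lemma fc_toL2 (g : AddCircle (2 * π) → ℂ) (hg : MemLp g ∞ μT) (n : ℤ) :
    fourierBasis.repr (toL2 g hg) n = fourierCoeff g n := by
  rw [fourierBasis_repr]
  exact fc_congr (toL2_coe g hg) n

lemma prod_fc {u v : AddCircle (2 * π) → ℂ} (hu : MemLp u ∞ μT) (hv : MemLp v ∞ μT)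
    (hu' : ∀ k : ℤ, k < 0 → fourierCoeff u k = 0) (hv' : ∀ k : ℤ, k < 0 → fourierCoeff v k = 0)
    {n : ℤ} (hn : n < 0) : fourierCoeff (fun x => u x * v x) n = 0 := by
  have hU : MemLp (fun x => fourier n x * conj (u x)) ∞ μT :=
    memtop_mul (memtop_fourier n) (memtop_conj hu)
  set U : L2 := toL2 _ hU with hUdef
  set V : L2 := toL2 v hv with hVdef
  have hUV : fourierCoeff (fun x => u x * v x) n = inner ℂ U V := by
    rw [MeasureTheory.L2.inner_def]
    unfold fourierCoeff
    refine integral_congr_ae ?_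
    filter_upwards [toL2_coe _ hU, toL2_coe v hv] with x h1 h2
    simp only [hUdef, hVdef, h1, h2, RCLike.inner_apply, smul_eq_mul, map_mul, conj_conj, ← fourier_neg]
    ring
  have hUorth : U ∈ Hardyᗮ := by
    refine mem_hardy_orth fun k hk => ?_
    rw [hUdef, fc_toL2]
    rw [fc_shift (memtop_conj hu) n k, fc_conj]
    rw [hu' (-(k - n)) (by omega), map_zero]
  have hVmem : V ∈ Hardy := fun k hk => by rw [hVdef, fc_toL2]; exact hv' k hk
  rw [hUV, ← inner_conj_symm, (Submodule.mem_orthogonal _ _).mp hUorth V hVmem, map_zero]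

end Aux2
section Aux3

lemma linf_eq_zero {a : Linf} (h : ⇑a =ᵐ[μT] 0) : a = 0 :=
  Lp.ext (h.trans (Lp.coeFn_zero ℂ ∞ μT).symm)

lemma key_conj_coeff {a : Linf} (ha : MemHinf (conjLp a))
    (ha0 : fourierCoeff ((conjLp a : Linf) : AddCircle (2 * π) → ℂ) 0 = 0) :
    ∀ n : ℤ, 0 ≤ n → fourierCoeff (⇑a) n = 0 := by
  intro n hn
  have hconj : ∀ k : ℤ, k ≤ 0 → fourierCoeff (fun x => conj (a x)) k = 0 := by
    intro k hk
    rcases lt_or_eq_of_le hk with h | h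
    · rw [← fc_congr (conjLp_coe a) k]
      exact ha k h
    · rw [← fc_congr (conjLp_coe a) k, h]
      exact ha0
  have h2 : fourierCoeff (⇑a) n = conj (fourierCoeff (fun x => conj (a x)) (-n)) := by
    rw [← fc_conj]
    exact fc_congr (Filter.Eventually.of_forall fun x => (Complex.conj_conj _).symm) n
  rw [h2, hconj (-n) (by omega), map_zero]

lemma part3 (a b : Linf) (ha' : a ≠ 0) (hb' : b ≠ 0) (ha : MemHinf (conjLp a))
    (ha0 : fourierCoeff ((conjLp a : Linf) : AddCircle (2 * π) → ℂ) 0 = 0) (hb : MemHinf b) :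
    ∃ f : L2, f ≠ 0 ∧ pairedS a b f = 0 := by
  set A : L2 := toL2 ⇑a (Lp.memLp a) with hA
  set B : L2 := toL2 ⇑b (Lp.memLp b) with hB
  have hBH : B ∈ Hardy := fun n hn => by rw [hB, fc_toL2]; exact hb n hn
  have hAO : (-A : L2) ∈ Hardyᗮ := Submodule.neg_mem _ (mem_hardy_orth fun n hn => by
    rw [hA, fc_toL2]; exact key_conj_coeff ha ha0 n hn)
  refine ⟨B + (-A), ?_, ?_⟩
  · intro h
    have hB0 : B = 0 := by rw [← Pplus_apply_add hBH hAO, h, map_zero]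
    apply hb'
    apply linf_eq_zero
    have h1 := toL2_coe ⇑b (Lp.memLp b)
    rw [← hB, hB0] at h1
    exact h1.symm.trans (Lp.coeFn_zero ℂ 2 μT)
  · rw [pairedS_apply, Pplus_apply_add hBH hAO, Pminus_apply_add hBH hAO]
    refine Lp.ext ?_
    filter_upwards [mul2_coe a B, mul2_coe b (-A), Lp.coeFn_add (mul2 a B) (mul2 b (-A)),
      Lp.coeFn_neg A, toL2_coe ⇑a (Lp.memLp a), toL2_coe ⇑b (Lp.memLp b),
      Lp.coeFn_zero ℂ 2 μT] with x h1 h2 h3 h4 h5 h6 h7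
    rw [Pi.add_apply] at h3
    rw [h3, h1, h2, h4, h7, Pi.neg_apply, ← hA, ← hB] at *
    rw [h5, h6]
    simp only [Pi.zero_apply]
    ring
end Aux3
section Aux4

lemma const_coeff_lt_one {bi : Linf} (hbiU : ∀ᵐ x ∂μT, ‖bi x‖ = 1)
    (hnc : ¬∃ c : ℂ, ∀ᵐ x ∂μT, bi x = c) :
    ‖fourierCoeff (⇑bi) 0‖ < 1 := by
  have hint : Integrable (⇑bi) μT := integrable_of_memtop (Lp.memLp bi)
  set c := fourierCoeff (⇑bi) 0 with hc
  have hc0 : c = ∫ x, bi x ∂μT := by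
    rw [hc]
    unfold fourierCoeff
    refine integral_congr_ae (Filter.Eventually.of_forall fun x => ?_)
    simp [fourier_zero]
  have hle : ‖c‖ ≤ 1 := by
    rw [hc0]
    calc ‖∫ x, bi x ∂μT‖ ≤ ∫ x, ‖bi x‖ ∂μT := norm_integral_le_integral_norm _
    _ = ∫ _x, (1:ℝ) ∂μT := integral_congr_ae (hbiU.mono fun x hx => hx)
    _ = 1 := by simp
  rcases lt_or_eq_of_le hle with h | h
  · exact h
  exfalso
  apply hnc
  refine ⟨c, ?_⟩
  have hint2 : Integrable (fun x => conj c * bi x) μT := hint.const_mul _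
  have hgint : Integrable (fun x => (1 : ℝ) - RCLike.re (conj c * bi x)) μT :=
    (integrable_const _).sub hint2.re
  have hnonneg : 0 ≤ᵐ[μT] fun x => (1:ℝ) - RCLike.re (conj c * bi x) := by
    filter_upwards [hbiU] with x hx
    have h1 : RCLike.re (conj c * bi x) ≤ ‖conj c * bi x‖ := RCLike.re_le_norm _
    have h2 : ‖conj c * bi x‖ = 1 := by
      rw [norm_mul, RCLike.norm_conj, ← h, hx, mul_one]
    simp only [Pi.zero_apply]
    linarith
  have hint0 : ∫ x, ((1:ℝ) - RCLike.re (conj c * bi x)) ∂μT = 0 := by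
    rw [integral_sub (integrable_const _) hint2.re, integral_re hint2,
      integral_const_mul, ← hc0, RCLike.conj_mul]
    simp [RCLike.re_to_complex, ← Complex.ofReal_pow, h]
  have hz := (integral_eq_zero_iff_of_nonneg_ae hnonneg hgint).mp hint0
  filter_upwards [hz, hbiU] with x hx1 hx2
  have hre : (conj c * bi x).re = 1 := by
    have := hx1
    simp only [Pi.zero_apply, RCLike.re_to_complex] at this
    linarith
  have hnrm : ‖conj c * bi x‖ = 1 := by
    rw [norm_mul, RCLike.norm_conj, ← h, hx2, mul_one]
  have him : (conj c * bi x).im = 0 := by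
    have h1 : Complex.normSq (conj c * bi x) = 1 := by
      rw [← Complex.sq_norm, hnrm, one_pow]
    have h2 : Complex.normSq (conj c * bi x)
        = (conj c * bi x).re * (conj c * bi x).re + (conj c * bi x).im * (conj c * bi x).im :=
      Complex.normSq_apply _
    have h3 : (conj c * bi x).im * (conj c * bi x).im = 0 := by nlinarith
    exact mul_self_eq_zero.mp h3
  have hone : conj c * bi x = 1 := by
    apply Complex.ext <;> simp [hre, him]
  have hcc : c * conj c = 1 := by
    rw [RCLike.mul_conj, h]
    norm_num
  calc bi x = c * conj c * bi x := by rw [hcc, one_mul]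
  _ = c * (conj c * bi x) := by ring
  _ = c := by rw [hone, mul_one]

end Aux4
section Aux5

lemma part2 (a b : Linf) (ha' : a ≠ 0) (hb' : b ≠ 0) (ha : MemHinf (conjLp a)) (hb : MemHinf b)
    (hfac : ∃ bi bo : Linf, IsInnerFn bi ∧ MemHinf bo ∧ b = mulInf bi bo ∧
        ¬∃ c : ℂ, ∀ᵐ x ∂μT, bi x = c) :
    ∃ f : L2, f ≠ 0 ∧ pairedS a b f = 0 := by
  obtain ⟨bi, bo, ⟨hbiH, hbiU⟩, hboH, hbfac, hnc⟩ := hfac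
  set c := fourierCoeff (⇑bi) 0 with hcdef
  have hclt : ‖c‖ < 1 := const_coeff_lt_one hbiU hnc
  -- the analytic part of the kernel element
  have hbict : MemLp (fun x => bi x - c) ∞ μT := (Lp.memLp bi).sub (memLp_const c)
  set u : AddCircle (2 * π) → ℂ := fun x => fourier (-1) x * (bi x - c) with hu
  have hut : MemLp u ∞ μT := memtop_mul (memtop_fourier _) hbict
  have huc : ∀ k : ℤ, k < 0 → fourierCoeff u k = 0 := by
    intro k hk
    rw [hu, fc_shift hbict (-1) k, fc_sub (Lp.memLp bi) (memLp_const c), fc_const]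
    rcases eq_or_lt_of_le (show k - (-1) ≤ 0 by omega) with h | h
    · rw [h, if_pos rfl, ← hcdef, sub_self]
    · rw [if_neg (by omega), hbiH _ h, sub_zero]
  set Fplus : AddCircle (2 * π) → ℂ := fun x => u x * bo x with hFplus
  have hFpt : MemLp Fplus ∞ μT := memtop_mul hut (Lp.memLp bo)
  have hFp : ∀ n : ℤ, n < 0 → fourierCoeff Fplus n = 0 := fun n hn =>
    prod_fc hut (Lp.memLp bo) huc hboH hn
  -- the anti-analytic part of the kernel element
  have honet : MemLp (fun x => 1 - conj c * bi x) ∞ μT :=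
    (memLp_const 1).sub ((Lp.memLp bi).const_mul _)
  set w : AddCircle (2 * π) → ℂ := fun x => conj (a x) * (1 - conj c * bi x) with hw
  have hwt : MemLp w ∞ μT := memtop_mul (memtop_conj (Lp.memLp a)) honet
  have hac : ∀ k : ℤ, k < 0 → fourierCoeff (fun x => conj (a x)) k = 0 := fun k hk => by
    rw [← fc_congr (conjLp_coe a) k]; exact ha k hk
  have honec : ∀ k : ℤ, k < 0 → fourierCoeff (fun x => 1 - conj c * bi x) k = 0 := by
    intro k hk
    rw [fc_sub (memLp_const 1) ((Lp.memLp bi).const_mul _), fc_const, if_neg (by omega),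
      fourierCoeff.const_mul, hbiH _ hk, mul_zero, sub_zero]
  have hwc : ∀ k : ℤ, k < 0 → fourierCoeff w k = 0 := fun k hk =>
    prod_fc (memtop_conj (Lp.memLp a)) honet hac honec hk
  set G : AddCircle (2 * π) → ℂ := fun x => -(fourier 1 x * w x) with hG
  have hGt : MemLp G ∞ μT := (memtop_mul (memtop_fourier 1) hwt).neg
  set Fminus : AddCircle (2 * π) → ℂ := fun x => conj (G x) with hFminus
  have hFmt : MemLp Fminus ∞ μT := memtop_conj hGt
  have hFmx : ∀ x, Fminus x = -(fourier (-1) x * (a x * (1 - c * conj (bi x)))) := by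
    intro x
    simp only [hFminus, hG, hw, map_neg, map_mul, map_sub, map_one, conj_conj, ← fourier_neg]
  have hFmc : ∀ n : ℤ, 0 ≤ n → fourierCoeff Fminus n = 0 := by
    intro n hn
    rw [hFminus, fc_conj, hG, fc_neg, fc_shift hwt 1 (-n), hwc _ (by omega), neg_zero, map_zero]
  -- assemble
  set f2p : L2 := toL2 Fplus hFpt with hf2p
  set f2m : L2 := toL2 Fminus hFmt with hf2m
  have hmemp : f2p ∈ Hardy := fun n hn => by rw [hf2p, fc_toL2]; exact hFp n hn
  have hmemm : f2m ∈ Hardyᗮ := mem_hardy_orth fun n hn => by rw [hf2m, fc_toL2]; exact hFmc n hn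
  have hbx : ⇑b =ᵐ[μT] fun x => bi x * bo x := by
    have h := mulInf_coe bi bo; rw [← hbfac] at h; exact h
  have hbi1 : ∀ᵐ x ∂μT, bi x * conj (bi x) = 1 := hbiU.mono fun x hx => by
    rw [RCLike.mul_conj, hx]; norm_num
  refine ⟨f2p + f2m, ?_, ?_⟩
  · intro h0
    have hm00 : f2m = 0 := by rw [← Pminus_apply_add hmemp hmemm, h0, map_zero]
    have hm0 : Fminus =ᵐ[μT] 0 := by
      have h1 := toL2_coe Fminus hFmt
      rw [← hf2m, hm00] at h1
      exact h1.symm.trans (Lp.coeFn_zero ℂ 2 μT)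
    apply ha'
    apply linf_eq_zero
    filter_upwards [hm0, hbiU] with x hx hbx'
    have hn1 : ‖fourier (-1) x‖ = 1 := Circle.norm_coe _
    have hz1 : fourier (-1) x ≠ 0 := by intro hz; rw [hz] at hn1; simp at hn1
    have hz2 : 1 - c * conj (bi x) ≠ 0 := by
      intro hz
      have h1 : c * conj (bi x) = 1 := by linear_combination -hz
      have h2 : ‖c * conj (bi x)‖ = 1 := by rw [h1, norm_one]
      rw [norm_mul, RCLike.norm_conj, hbx', mul_one] at h2
      exact absurd h2 (ne_of_lt hclt)
    have hx2 : fourier (-1) x * (a x * (1 - c * conj (bi x))) = 0 := by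
      have h3 := hx
      rw [hFmx x] at h3
      simpa using h3
    rcases mul_eq_zero.mp hx2 with h | h
    · exact absurd h hz1
    rcases mul_eq_zero.mp h with h' | h'
    · simpa using h'
    · exact absurd h' hz2
  · rw [pairedS_apply, Pplus_apply_add hmemp hmemm, Pminus_apply_add hmemp hmemm]
    refine Lp.ext ?_
    filter_upwards [mul2_coe a f2p, mul2_coe b f2m, Lp.coeFn_add (mul2 a f2p) (mul2 b f2m),
      toL2_coe Fplus hFpt, toL2_coe Fminus hFmt, hbx, hbi1,
      Lp.coeFn_zero ℂ 2 μT] with x h1 h2 h3 h4 h5 h6 h7 h8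
    rw [Pi.add_apply] at h3
    rw [h3, h1, h2, h8, Pi.zero_apply, hf2p, hf2m, h4, h5, h6, hFmx x]
    have h9 : Fplus x = fourier (-1) x * (bi x - c) * bo x := by rw [hFplus, hu]
    rw [h9]
    linear_combination (a x * bo x * fourier (-1) x * c) * h7

end Aux5
/-- (ii) If `a, b` are nonzero, `ā ∈ H^∞` and `b ∈ H^∞` has a nontrivial inner factor,
then `ker S_{a,b} ≠ {0}`.  (iii) In particular, if `ā ∈ H^∞` with vanishing constant
term and `b ∈ H^∞`, then `ker S_{a,b} ≠ {0}`. -/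
theorem statement12 :
    (∀ a b : Linf, a ≠ 0 → b ≠ 0 → MemHinf (conjLp a) → MemHinf b →
      (∃ bi bo : Linf, IsInnerFn bi ∧ MemHinf bo ∧ b = mulInf bi bo ∧
        ¬∃ c : ℂ, ∀ᵐ x ∂μT, bi x = c) →
      ∃ f : L2, f ≠ 0 ∧ pairedS a b f = 0)
  ∧ (∀ a b : Linf, a ≠ 0 → b ≠ 0 → MemHinf (conjLp a) →
      fourierCoeff ((conjLp a : Linf) : AddCircle (2 * π) → ℂ) 0 = 0 → MemHinf b →
      ∃ f : L2, f ≠ 0 ∧ pairedS a b f = 0) := by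
  constructor
  · intro a b ha' hb' ha hb hfac
    exact part2 a b ha' hb' ha hb hfac
  · intro a b ha' hb' ha ha0 hb
    exact part3 a b ha' hb' ha ha0 hb

end
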